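/- arXiv:1103.0959 — 2 statements merged into one kernel-verified Lean document; each statement's English description precedes it below -/
import Mathlib

section
/- Let C be a skeletal finite EI category (viewed as having finitely many objects and morphisms) and k a field. The k-linear span Λ of all non-isomorphisms in the category algebra kC is a two-sided ideal of kC, and this ideal is nilpotent. -/
/-!
In a skeletal EI category a morphism is an isomorphism exactly when its source and target
coincide, and morphisms `x ⟶ y` and `y ⟶ x` force `x = y`. So a composite with a
non-isomorphism factor is again a non-isomorphism, which makes `Λ` a two-sided ideal.
The number `height x` of objects mapping to `x` strictly increases along every non-isomorphism; hence
`Λ ^ n` is spanned by morphisms `x ⟶ y` whose heights differ by at least `n`, and vanishes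
once `n` exceeds the number of objects.
-/

open CategoryTheory
open scoped Classical

/-- Witness that `A` is the category algebra `kC` of the finite category `C`: it has a
`k`-basis indexed by the morphisms of `C`, the product of two basis elements is the basis
element of their composite when composable and `0` otherwise, and the identity element is
the sum of the identity morphisms. -/
structure CategoryAlgebraData (k : Type*) [Field k] (C : Type*) [Category C] [Fintype C]
    (A : Type*) [Ring A] [Algebra k A] where
  basis : Module.Basis (Σ x y : C, x ⟶ y) k A
  basis_mul_basis : ∀ (x₁ y₁ x₂ y₂ : C) (f : x₁ ⟶ y₁) (g : x₂ ⟶ y₂),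
    basis ⟨x₁, y₁, f⟩ * basis ⟨x₂, y₂, g⟩ =
      if h : y₂ = x₁ then basis ⟨x₂, y₁, g ≫ eqToHom h ≫ f⟩ else 0
  one_def : (1 : A) = ∑ x : C, basis ⟨x, x, 𝟙 x⟩

namespace CategoryTheory

variable {C : Type*} [Category C]

lemma isIso_iff_eq_of_skeletal_ei (hEI : ∀ (x : C) (f : x ⟶ x), IsIso f)
    (hskel : ∀ x y : C, (x ≅ y) → x = y) {x y : C} (f : x ⟶ y) : IsIso f ↔ x = y := by
  refine ⟨fun _ ↦ hskel x y (asIso f), fun h ↦ ?_⟩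
  subst h
  exact hEI x f

lemma eq_of_hom_of_hom_of_skeletal_ei (hEI : ∀ (x : C) (f : x ⟶ x), IsIso f)
    (hskel : ∀ x y : C, (x ≅ y) → x = y) {x y : C} (f : x ⟶ y) (g : y ⟶ x) : x = y := by
  have := hEI x (f ≫ g)
  have := hEI y (g ≫ f)
  have : IsSplitMono f := ⟨⟨g ≫ inv (f ≫ g), by rw [← Category.assoc, IsIso.hom_inv_id]⟩⟩
  have : Epi f := epi_of_epi g f
  have := isIso_of_epi_of_isSplitMono f
  exact hskel x y (asIso f)

lemma not_isIso_comp_of_not_isIso_left (hEI : ∀ (x : C) (f : x ⟶ x), IsIso f)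
    (hskel : ∀ x y : C, (x ≅ y) → x = y) {x y z : C} (f : x ⟶ y) (g : y ⟶ z)
    (hf : ¬IsIso f) : ¬IsIso (f ≫ g) := by
  rw [isIso_iff_eq_of_skeletal_ei hEI hskel] at hf ⊢
  rintro rfl
  exact hf (eq_of_hom_of_hom_of_skeletal_ei hEI hskel f g)

lemma not_isIso_comp_of_not_isIso_right (hEI : ∀ (x : C) (f : x ⟶ x), IsIso f)
    (hskel : ∀ x y : C, (x ≅ y) → x = y) {x y z : C} (f : x ⟶ y) (g : y ⟶ z)
    (hg : ¬IsIso g) : ¬IsIso (f ≫ g) := by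
  rw [isIso_iff_eq_of_skeletal_ei hEI hskel] at hg ⊢
  rintro rfl
  exact hg (eq_of_hom_of_hom_of_skeletal_ei hEI hskel g f)

variable [Fintype C]

noncomputable def height (x : C) : ℕ := (Finset.univ.filter fun z : C ↦ Nonempty (z ⟶ x)).card

lemma height_le_card (x : C) : height x ≤ Fintype.card C :=
  Finset.card_le_univ _

lemma height_lt_height_of_not_isIso (hEI : ∀ (x : C) (f : x ⟶ x), IsIso f)
    (hskel : ∀ x y : C, (x ≅ y) → x = y) {x y : C} (f : x ⟶ y) (hf : ¬IsIso f) :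
    height x < height y := by
  refine Finset.card_lt_card (Finset.ssubset_iff_of_subset ?_ |>.2 ⟨y, ?_, ?_⟩)
  · intro z hz
    simp only [Finset.mem_filter, Finset.mem_univ, true_and] at hz ⊢
    exact hz.map (· ≫ f)
  · simpa using ⟨𝟙 y⟩
  · simp only [Finset.mem_filter, Finset.mem_univ, true_and, not_nonempty_iff]
    refine ⟨fun g ↦ hf ?_⟩
    rw [isIso_iff_eq_of_skeletal_ei hEI hskel]
    exact eq_of_hom_of_hom_of_skeletal_ei hEI hskel f g

end CategoryTheory

namespace CategoryAlgebraData

open Submodule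

variable {k : Type*} [Field k] {C : Type*} [Category C] [Fintype C]
  {A : Type*} [Ring A] [Algebra k A] (hA : CategoryAlgebraData k C A)

lemma span_mul_span_le {S T U : Set (Σ x y : C, x ⟶ y)}
    (h : ∀ {x y z : C} (f : x ⟶ y) (g : y ⟶ z), ⟨y, z, g⟩ ∈ S → ⟨x, y, f⟩ ∈ T →
      ⟨x, z, f ≫ g⟩ ∈ U) :
    span k (hA.basis '' S) * span k (hA.basis '' T) ≤ span k (hA.basis '' U) := by
  rw [span_mul_span, span_le]
  rintro _ ⟨_, ⟨⟨y, z, g⟩, hg, rfl⟩, _, ⟨⟨x, y', f⟩, hf, rfl⟩, rfl⟩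
  simp only [hA.basis_mul_basis]
  split_ifs with h'
  · subst h'
    simpa using subset_span (R := k) (Set.mem_image_of_mem hA.basis (h f g hg hf))
  · exact zero_mem _

lemma top_mul_span_le {S : Set (Σ x y : C, x ⟶ y)}
    (h : ∀ {x y z : C} (f : x ⟶ y) (g : y ⟶ z), ⟨x, y, f⟩ ∈ S → ⟨x, z, f ≫ g⟩ ∈ S) :
    ⊤ * span k (hA.basis '' S) ≤ span k (hA.basis '' S) := by
  rw [← hA.basis.span_eq, ← Set.image_univ]
  exact hA.span_mul_span_le fun f g _ hf ↦ h f g hf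

lemma span_mul_top_le {S : Set (Σ x y : C, x ⟶ y)}
    (h : ∀ {x y z : C} (f : x ⟶ y) (g : y ⟶ z), ⟨y, z, g⟩ ∈ S → ⟨x, z, f ≫ g⟩ ∈ S) :
    span k (hA.basis '' S) * ⊤ ≤ span k (hA.basis '' S) := by
  rw [← hA.basis.span_eq, ← Set.image_univ]
  exact hA.span_mul_span_le fun f g hg _ ↦ h f g hg

lemma span_nonIso_pow_succ_le (hEI : ∀ (x : C) (f : x ⟶ x), IsIso f)
    (hskel : ∀ x y : C, (x ≅ y) → x = y) (n : ℕ) :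
    span k (hA.basis '' {i | ¬IsIso i.2.2}) ^ (n + 1) ≤
      span k (hA.basis '' {i | height i.1 + (n + 1) ≤ height i.2.1}) := by
  induction n with
  | zero =>
    rw [pow_one]
    exact span_mono (Set.image_mono fun i hi ↦ height_lt_height_of_not_isIso hEI hskel i.2.2 hi)
  | succ n ih =>
    rw [pow_succ]
    refine (mul_le_mul' ih le_rfl).trans (hA.span_mul_span_le fun f g hg hf ↦ ?_)
    have := height_lt_height_of_not_isIso hEI hskel f hf
    simp only [Set.mem_ofPred_eq] at hg ⊢
    omega

lemma span_nonIso_pow_eq_bot (hEI : ∀ (x : C) (f : x ⟶ x), IsIso f)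
    (hskel : ∀ x y : C, (x ≅ y) → x = y) :
    span k (hA.basis '' {i | ¬IsIso i.2.2}) ^ (Fintype.card C + 1) = ⊥ := by
  refine eq_bot_iff.2 <| (hA.span_nonIso_pow_succ_le hEI hskel _).trans ?_
  have hempty : {i : Σ x y : C, x ⟶ y | height i.1 + (Fintype.card C + 1) ≤ height i.2.1} = ∅ :=
    Set.eq_empty_of_forall_notMem fun i hi ↦ by
      have := height_le_card i.2.1
      simp only [Set.mem_ofPred_eq] at hi
      omega
  simp [hempty]

end CategoryAlgebraData

/-- In the category algebra of a skeletal finite EI category, the span of the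
non-isomorphisms is a two-sided ideal, and this ideal is nilpotent. -/
theorem stmt5 {k : Type*} [Field k] {C : Type*} [Category C] [Fintype C]
    [∀ x y : C, Finite (x ⟶ y)]
    (hEI : ∀ (x : C) (f : x ⟶ x), IsIso f)
    (hskel : ∀ x y : C, (x ≅ y) → x = y)
    {A : Type*} [Ring A] [Algebra k A] (hA : CategoryAlgebraData k C A)
    (Λ : Submodule k A)
    (hΛ : Λ = Submodule.span k
      {a : A | ∃ (x y : C) (f : x ⟶ y), ¬ IsIso f ∧ a = hA.basis ⟨x, y, f⟩}) :
    (∀ r : A, ∀ a ∈ Λ, r * a ∈ Λ ∧ a * r ∈ Λ) ∧ ∃ n : ℕ, Λ ^ n = ⊥ := by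
  have hΛ' : Λ = Submodule.span k (hA.basis '' {i | ¬IsIso i.2.2}) := by
    rw [hΛ]
    congr 1
    ext a
    simp [eq_comm]
  subst hΛ'
  refine ⟨fun r a ha ↦ ⟨?_, ?_⟩, ⟨_, hA.span_nonIso_pow_eq_bot hEI hskel⟩⟩
  · exact hA.top_mul_span_le (fun f g hf ↦ not_isIso_comp_of_not_isIso_left hEI hskel f g hf)
      (Submodule.mul_mem_mul Submodule.mem_top ha)
  · exact hA.span_mul_top_le (fun f g hg ↦ not_isIso_comp_of_not_isIso_right hEI hskel f g hg)
      (Submodule.mul_mem_mul ha Submodule.mem_top)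
end

section
/- Let C be a skeletal finite EI category satisfying the UFP such that all automorphism groups of objects have orders invertible in the field k. Let α : x → y be an unfactorizable morphism, H = Aut_C(y), H₀ = Stab_H(α) = {h ∈ H : h∘α = α}, and e = (1/|H₀|) Σ_{h ∈ H₀} h ∈ kC. Then e is an idempotent of kC and the left kC-module kC·α is isomorphic to the projective module kC·e; in particular kC·α is a projective kC-module. -/
open CategoryTheory
open scoped Classical

/-- A morphism is unfactorizable if it is not an isomorphism and in any factorization into
two morphisms one factor is an isomorphism. -/
def Unfactorizable {C : Type*} [Category C] {x z : C} (α : x ⟶ z) : Prop :=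
  ¬ IsIso α ∧ ∀ (y : C) (β : x ⟶ y) (γ : y ⟶ z), α = β ≫ γ → IsIso β ∨ IsIso γ

/-- A path in a category all of whose edges are unfactorizable morphisms. -/
inductive PathUnfact {C : Type*} [Category C] : ∀ {x y : C}, Quiver.Path x y → Prop
  | nil {x : C} : PathUnfact (Quiver.Path.nil : Quiver.Path x x)
  | cons {x y z : C} {p : Quiver.Path x y} {e : y ⟶ z} :
      PathUnfact p → Unfactorizable e → PathUnfact (p.cons e)

/-- `TwistedBy p q g'` says that the paths `p = (α₁, …, αₙ)` and `q = (β₁, …, βₙ)` pass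
through the same objects and there are automorphisms `hᵢ` of the intermediate objects with
`β₁ = h₁ ∘ α₁`, `βᵢ = hᵢ ∘ αᵢ ∘ hᵢ₋₁⁻¹`, and `βₙ = g' ∘ αₙ ∘ hₙ₋₁⁻¹`, where `g'` is the
final twist at the common target. -/
inductive TwistedBy {C : Type*} [Category C] :
    ∀ {x y : C}, Quiver.Path x y → Quiver.Path x y → (y ≅ y) → Prop
  | nil {x : C} :
      TwistedBy (Quiver.Path.nil : Quiver.Path x x) Quiver.Path.nil (Iso.refl x)
  | cons {x w y : C} {p q : Quiver.Path x w} (g : w ≅ w) (g' : y ≅ y) (e : w ⟶ y) :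
      TwistedBy p q g → TwistedBy (p.cons e) (q.cons (g.inv ≫ e ≫ g'.hom)) g'

/-- The Unique Factorization Property: any two decompositions of a non-isomorphism into
unfactorizable morphisms have the same length, pass through the same intermediate objects,
and differ only by automorphisms of the intermediate objects. -/
def SatisfiesUFP (C : Type*) [Category C] : Prop :=
  ∀ {x y : C} (p q : Quiver.Path x y), PathUnfact p → PathUnfact q →
    ¬ IsIso (composePath p) → composePath p = composePath q → TwistedBy p q (Iso.refl y)

/-!
Right multiplication by `α` and by `e` present `kC·α` and `kC·e` as quotients of `kC`, so they
are isomorphic as soon as `r·α = 0 ↔ r·e = 0`. One direction follows from `e·α = α`. For the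
other, the UFP shows that two morphisms `f, f'` out of `y` with `f ∘ α = f' ∘ α` differ by an
element of `H₀`, so `f ∘ α ↦ f·e` is a well-defined `k`-linear map sending `r·α` to `r·e`.
Finally `kC·e` is a direct summand of `kC` since `e` is idempotent.
-/

section EI

variable {C : Type*} [Category C]

theorem isIso_of_hom_to_source (hEI : ∀ (x : C) (f : x ⟶ x), IsIso f) {u v : C}
    (f : u ⟶ v) (g : v ⟶ u) : IsIso f := by
  have := hEI u (f ≫ g)
  have := hEI v (g ≫ f)
  have : IsSplitEpi f := IsSplitEpi.mk' ⟨inv (g ≫ f) ≫ g, by simp⟩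
  have : Mono f := mono_of_mono f g
  exact isIso_of_mono_of_isSplitEpi f

theorem not_isIso_comp_of_not_isIso_left (hEI : ∀ (x : C) (f : x ⟶ x), IsIso f) {u v w : C}
    {f : u ⟶ v} (hf : ¬IsIso f) (g : v ⟶ w) : ¬IsIso (f ≫ g) :=
  fun _ => hf (isIso_of_hom_to_source hEI f (g ≫ inv (f ≫ g)))

noncomputable def objectsBetween [Fintype C] (u v : C) : Finset C :=
  Finset.univ.filter fun z => Nonempty (u ⟶ z) ∧ Nonempty (z ⟶ v)

theorem objectsBetween_ssubset_of_not_isIso_right [Fintype C]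
    (hEI : ∀ (x : C) (f : x ⟶ x), IsIso f) {u w v : C} (β : u ⟶ w) {γ : w ⟶ v} (hγ : ¬IsIso γ) :
    objectsBetween u w ⊂ objectsBetween u v := by
  refine Finset.ssubset_iff_subset_ne.2 ⟨fun z hz => ?_, fun h => ?_⟩
  · simp only [objectsBetween, Finset.mem_filter, Finset.mem_univ, true_and] at hz ⊢
    exact ⟨hz.1, hz.2.map (· ≫ γ)⟩
  · have hv : v ∈ objectsBetween u v := by simpa [objectsBetween] using ⟨⟨β ≫ γ⟩, ⟨𝟙 v⟩⟩
    rw [← h] at hv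
    simp only [objectsBetween, Finset.mem_filter, Finset.mem_univ, true_and] at hv
    exact hγ (isIso_of_hom_to_source hEI γ hv.2.some)

theorem objectsBetween_ssubset_of_not_isIso_left [Fintype C]
    (hEI : ∀ (x : C) (f : x ⟶ x), IsIso f) {u w v : C} {β : u ⟶ w} (hβ : ¬IsIso β) (γ : w ⟶ v) :
    objectsBetween w v ⊂ objectsBetween u v := by
  refine Finset.ssubset_iff_subset_ne.2 ⟨fun z hz => ?_, fun h => ?_⟩
  · simp only [objectsBetween, Finset.mem_filter, Finset.mem_univ, true_and] at hz ⊢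
    exact ⟨hz.1.map (β ≫ ·), hz.2⟩
  · have hu : u ∈ objectsBetween u v := by simpa [objectsBetween] using ⟨⟨𝟙 u⟩, ⟨β ≫ γ⟩⟩
    rw [← h] at hu
    simp only [objectsBetween, Finset.mem_filter, Finset.mem_univ, true_and] at hu
    exact hβ (isIso_of_hom_to_source hEI β hu.1.some)

theorem PathUnfact.comp {x y z : C} {p : Quiver.Path x y} {q : Quiver.Path y z}
    (hp : PathUnfact p) (hq : PathUnfact q) : PathUnfact (p.comp q) := by
  induction hq with
  | nil => exact hp
  | cons _ he ih => exact ih.cons he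

theorem exists_pathUnfact_composePath_eq [Fintype C] (hEI : ∀ (x : C) (f : x ⟶ x), IsIso f)
    {u v : C} (f : u ⟶ v) (hf : ¬IsIso f) :
    ∃ p : Quiver.Path u v, PathUnfact p ∧ composePath p = f := by
  induction hn : (objectsBetween u v).card using Nat.strong_induction_on generalizing u v with
  | _ n ih =>
    by_cases hunf : Unfactorizable f
    · exact ⟨.cons .nil f, .cons .nil hunf, by simp⟩
    obtain ⟨w, β, γ, rfl, hβ, hγ⟩ :
        ∃ (w : C) (β : u ⟶ w) (γ : w ⟶ v), f = β ≫ γ ∧ ¬IsIso β ∧ ¬IsIso γ := by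
      simpa [Unfactorizable, hf, not_or] using hunf
    obtain ⟨p, hp, rfl⟩ := ih _ (hn ▸ Finset.card_lt_card
      (objectsBetween_ssubset_of_not_isIso_right hEI β hγ)) β hβ rfl
    obtain ⟨q, hq, rfl⟩ := ih _ (hn ▸ Finset.card_lt_card
      (objectsBetween_ssubset_of_not_isIso_left hEI hβ γ)) γ hγ rfl
    exact ⟨p.comp q, hp.comp hq, composePath_comp p q⟩

theorem Quiver.Path.cons_nil_comp_inj {V : Type*} [Quiver V] {x w v : V} {a b : x ⟶ w}
    {p q : Quiver.Path w v}
    (h : (Quiver.Path.nil.cons a).comp p = (Quiver.Path.nil.cons b).comp q) : a = b ∧ p = q := by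
  simpa using (Quiver.Path.comp_inj' (p₁ := Quiver.Path.nil.cons a)
    (p₂ := Quiver.Path.nil.cons b) rfl).1 h

theorem TwistedBy.exists_of_cons_nil_comp {x w v : C} (β : x ⟶ w) (p : Quiver.Path w v)
    {q : Quiver.Path x v} {g : v ≅ v} (ht : TwistedBy ((Quiver.Path.nil.cons β).comp p) q g) :
    ∃ (h : w ≅ w) (q' : Quiver.Path w v), q = (Quiver.Path.nil.cons (β ≫ h.hom)).comp q' ∧
      composePath q' = h.inv ≫ composePath p ≫ g.hom := by
  induction p with
  | nil =>
    rcases ht with _ | ⟨g₀, _, _, ht₀⟩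
    cases ht₀
    exact ⟨g, .nil, by simp, by simp⟩
  | cons p e ih =>
    rcases ht with _ | ⟨g₀, _, _, ht₀⟩
    obtain ⟨h, q', rfl, hq'⟩ := ih ht₀
    exact ⟨h, q'.cons (g₀.inv ≫ e ≫ g.hom), rfl, by simp [hq']⟩

theorem Unfactorizable.exists_aut_of_comp_eq_comp [Fintype C]
    (hEI : ∀ (x : C) (f : x ⟶ x), IsIso f) (hUFP : SatisfiesUFP C) {x y v : C} {α : x ⟶ y}
    (hα : Unfactorizable α) {f f' : y ⟶ v} (hff : α ≫ f = α ≫ f') :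
    ∃ h : Aut y, α ≫ h.hom = α ∧ f' = h.hom ≫ f := by
  by_cases hf : IsIso f
  · have := hEI y (f' ≫ inv f)
    refine ⟨asIso (f' ≫ inv f), ?_, by simp⟩
    simp [← reassoc_of% hff]
  have hf' : ¬IsIso f' := fun _ => hf (isIso_of_hom_to_source hEI f (inv f'))
  obtain ⟨p, hp, rfl⟩ := exists_pathUnfact_composePath_eq hEI f hf
  obtain ⟨p', hp', rfl⟩ := exists_pathUnfact_composePath_eq hEI f' hf'
  have ht := hUFP _ _ ((PathUnfact.nil.cons hα).comp hp) ((PathUnfact.nil.cons hα).comp hp')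
    (by simpa [composePath_comp] using not_isIso_comp_of_not_isIso_left hEI hα.1 _)
    (by simpa [composePath_comp] using hff)
  obtain ⟨h, q, hq, hcomp⟩ := ht.exists_of_cons_nil_comp
  obtain ⟨hαh, rfl⟩ := Quiver.Path.cons_nil_comp_inj hq
  exact ⟨h.symm, (Iso.comp_inv_eq h).2 hαh, by simp [hcomp]⟩

def homStabilizer {x y : C} (α : x ⟶ y) : Subgroup (Aut y) where
  carrier := {h | α ≫ h.hom = α}
  one_mem' := Category.comp_id α
  mul_mem' {a b} ha hb := by
    change α ≫ b.hom ≫ a.hom = α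
    rw [reassoc_of% hb, ha]
  inv_mem' {a} ha := (Iso.comp_inv_eq a).2 ha.symm

end EI

section LeftIdeal

variable {R : Type*} [Ring R]

theorem Ideal.nonempty_span_singleton_equiv_of_mul_eq_zero_iff {a b : R}
    (h : ∀ r : R, r * a = 0 ↔ r * b = 0) :
    Nonempty ((Ideal.span {a} : Ideal R) ≃ₗ[R] (Ideal.span {b} : Ideal R)) := by
  have hker : LinearMap.ker (LinearMap.toSpanSingleton R R a) =
      LinearMap.ker (LinearMap.toSpanSingleton R R b) := by
    ext r; simpa using h r
  exact ⟨(LinearEquiv.ofEq _ _ (LinearMap.range_toSpanSingleton a).symm).trans <|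
    (LinearMap.quotKerEquivRange _).symm.trans <| (Submodule.quotEquivOfEq _ _ hker).trans <|
    (LinearMap.quotKerEquivRange _).trans <|
    LinearEquiv.ofEq _ _ (LinearMap.range_toSpanSingleton b)⟩

theorem Ideal.projective_span_singleton_of_isIdempotentElem {e : R} (he : IsIdempotentElem e) :
    Module.Projective R (Ideal.span {e} : Ideal R) := by
  refine Module.Projective.of_split (Ideal.span {e}).subtype
    ((LinearMap.toSpanSingleton R R e).codRestrict _ fun r => Ideal.mul_mem_left _ r
      (Ideal.mem_span_singleton_self e)) (LinearMap.ext fun ⟨z, hz⟩ => Subtype.ext ?_)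
  obtain ⟨r, rfl⟩ := Ideal.mem_span_singleton'.1 hz
  change r * e * e = r * e
  rw [mul_assoc, he.eq]

end LeftIdeal

namespace MulHom

variable (k : Type*) {G A : Type*} [Field k] [Group G] [Fintype G] [Ring A] [Algebra k A]

noncomputable def average (ρ : G →ₙ* A) : A := (Nat.card G : k)⁻¹ • ∑ g, ρ g

variable {k}

theorem mul_average (ρ : G →ₙ* A) (g : G) : ρ g * ρ.average k = ρ.average k := by
  simp only [average, mul_smul_comm, Finset.mul_sum, ← map_mul]
  congr 1
  exact Fintype.sum_equiv (Equiv.mulLeft g) _ _ fun _ => rfl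

theorem average_mul_of_forall_mul_eq (ρ : G →ₙ* A) (hG : (Nat.card G : k) ≠ 0) {b : A}
    (hb : ∀ g, ρ g * b = b) : ρ.average k * b = b := by
  rw [average, smul_mul_assoc, Finset.sum_mul, Finset.sum_congr rfl fun g _ => hb g,
    Finset.sum_const, Finset.card_univ, ← Nat.card_eq_fintype_card, ← Nat.cast_smul_eq_nsmul k,
    smul_smul, inv_mul_cancel₀ hG, one_smul]

theorem isIdempotentElem_average (ρ : G →ₙ* A) (hG : (Nat.card G : k) ≠ 0) :
    IsIdempotentElem (ρ.average k) :=
  ρ.average_mul_of_forall_mul_eq hG (ρ.mul_average)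

end MulHom

namespace CategoryAlgebraData

variable {k C A : Type*} [Field k] [Category C] [Fintype C] [Ring A] [Algebra k A]
  (hA : CategoryAlgebraData k C A)

@[simp]
theorem basis_mul_basis_comp {x y z : C} (f : x ⟶ y) (g : y ⟶ z) :
    hA.basis ⟨y, z, g⟩ * hA.basis ⟨x, y, f⟩ = hA.basis ⟨x, z, f ≫ g⟩ := by
  simp [hA.basis_mul_basis]

theorem basis_mul_basis_of_ne {x₁ y₁ x₂ y₂ : C} (f : x₁ ⟶ y₁) (g : x₂ ⟶ y₂) (h : y₂ ≠ x₁) :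
    hA.basis ⟨x₁, y₁, f⟩ * hA.basis ⟨x₂, y₂, g⟩ = 0 := by
  simp [hA.basis_mul_basis, h]

noncomputable def autMulHom (y : C) : Aut y →ₙ* A where
  toFun h := hA.basis ⟨y, y, h.hom⟩
  map_mul' a b := (hA.basis_mul_basis_comp b.hom a.hom).symm

theorem mul_eq_zero_of_mul_basis_eq_zero (hEI : ∀ (x : C) (f : x ⟶ x), IsIso f)
    (hUFP : SatisfiesUFP C) {x y : C} {α : x ⟶ y} (hα : Unfactorizable α) {e : A}
    (he : ∀ h ∈ homStabilizer α, hA.basis ⟨y, y, h.hom⟩ * e = e) {r : A}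
    (hr : r * hA.basis ⟨x, y, α⟩ = 0) : r * e = 0 := by
  -- `Ψ` sends `f ∘ α` to `f·e`; this is well defined since `f ∘ α` determines `f` up to `H₀`.
  set i : (Σ v, y ⟶ v) → Σ u v, u ⟶ v := fun t => ⟨x, t.1, α ≫ t.2⟩
  set T : (Σ v, y ⟶ v) → A := fun t => hA.basis ⟨y, t.1, t.2⟩ * e
  have hT : T.FactorsThrough i := by
    rintro ⟨v, f⟩ ⟨v', f'⟩ hff
    obtain rfl : v = v' := congrArg (·.2.1) hff
    replace hff : α ≫ f = α ≫ f' := by simpa [i] using hff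
    obtain ⟨h, hh, rfl⟩ := hα.exists_aut_of_comp_eq_comp hEI hUFP hff
    simp only [T, ← hA.basis_mul_basis_comp, mul_assoc, he h hh]
  set Ψ : A →ₗ[k] A := hA.basis.constr k (Function.extend i T 0)
  have hΨ : ∀ s, Ψ (hA.basis s * hA.basis ⟨x, y, α⟩) = hA.basis s * e := by
    rintro ⟨u, v, g⟩
    by_cases hu : u = y
    · subst hu
      simpa [Ψ] using hT.extend_apply 0 ⟨v, g⟩
    · have hid : hA.basis ⟨y, y, 𝟙 y⟩ * e = e := he 1 (homStabilizer α).one_mem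
      rw [hA.basis_mul_basis_of_ne _ _ (Ne.symm hu), ← hid, ← mul_assoc,
        hA.basis_mul_basis_of_ne _ _ (Ne.symm hu), map_zero, zero_mul]
  have hΨ_mul : Ψ ∘ₗ LinearMap.mulRight k (hA.basis ⟨x, y, α⟩) = LinearMap.mulRight k e :=
    hA.basis.ext hΨ
  simpa [hr] using (LinearMap.congr_fun hΨ_mul r).symm

end CategoryAlgebraData

/-- For an unfactorizable morphism `α : x ⟶ y` in a finite free EI category (a skeletal
finite EI category with the UFP) whose automorphism group orders are invertible in `k`,
the averaging idempotent `e = |H₀|⁻¹ Σ_{h ∈ H₀} h` over the stabilizer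
`H₀ = Stab_{Aut(y)}(α)` is idempotent in `kC`, and the left ideal `kC·α` is isomorphic to
the projective module `kC·e`; in particular `kC·α` is projective. -/
theorem stmt10 {k : Type*} [Field k] {C : Type*} [Category C] [Fintype C]
    [∀ x y : C, Finite (x ⟶ y)]
    (hEI : ∀ (x : C) (f : x ⟶ x), IsIso f)
    (hskel : ∀ x y : C, (x ≅ y) → x = y)
    (hUFP : SatisfiesUFP C)
    (hord : ∀ x : C, (Nat.card (Aut x) : k) ≠ 0)
    {A : Type*} [Ring A] [Algebra k A] (hA : CategoryAlgebraData k C A)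
    {x y : C} (α : x ⟶ y) (hα : Unfactorizable α)
    (e : A)
    (he : e = (Nat.card {h : Aut y // α ≫ h.hom = α} : k)⁻¹ •
      ∑ᶠ h : Aut y, if α ≫ h.hom = α then hA.basis ⟨y, y, h.hom⟩ else 0) :
    IsIdempotentElem e ∧
    Nonempty ((Ideal.span {hA.basis ⟨x, y, α⟩} : Ideal A) ≃ₗ[A] (Ideal.span {e} : Ideal A)) ∧
    Module.Projective A (Ideal.span {hA.basis ⟨x, y, α⟩} : Ideal A) := by
  have : Finite (Aut y) := Finite.of_injective (fun h : Aut y => h.hom) fun _ _ h => Iso.ext h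
  have := Fintype.ofFinite (Aut y)
  set H := homStabilizer α
  set ρ := (hA.autMulHom y).comp H.subtype.toMulHom
  have hH : (Nat.card H : k) ≠ 0 := fun h0 => by
    obtain ⟨m, hm⟩ := H.card_subgroup_dvd_card
    exact hord y (by rw [hm, Nat.cast_mul, h0, zero_mul])
  have he_avg : e = ρ.average k := by
    rw [he, finsum_eq_sum_of_fintype, ← Finset.sum_filter]
    exact congrArg₂ _ rfl (Finset.sum_subtype _ (fun _ => Finset.mem_filter_univ _) _)
  have he_stab : ∀ h ∈ H, hA.basis ⟨y, y, h.hom⟩ * e = e := fun h hh =>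
    he_avg ▸ ρ.mul_average ⟨h, hh⟩
  have he_α : e * hA.basis ⟨x, y, α⟩ = hA.basis ⟨x, y, α⟩ :=
    he_avg ▸ ρ.average_mul_of_forall_mul_eq hH fun h => by
      simp [ρ, CategoryAlgebraData.autMulHom, show α ≫ h.1.hom = α from h.2]
  have hker (r : A) : r * hA.basis ⟨x, y, α⟩ = 0 ↔ r * e = 0 :=
    ⟨hA.mul_eq_zero_of_mul_basis_eq_zero hEI hUFP hα he_stab,
      fun hr => by rw [← he_α, ← mul_assoc, hr, zero_mul]⟩
  have he_idem : IsIdempotentElem e := he_avg ▸ ρ.isIdempotentElem_average hH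
  obtain ⟨φ⟩ := Ideal.nonempty_span_singleton_equiv_of_mul_eq_zero_iff hker
  have := Ideal.projective_span_singleton_of_isIdempotentElem he_idem
  exact ⟨he_idem, ⟨φ⟩, .of_equiv' φ.symm⟩
end
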